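/- arXiv:2102.00972 — 2 statements merged into one kernel-verified Lean document; each statement's English description precedes it below -/
import Mathlib

section
/- Let α, β be real numbers with 4 < α² < 6, 0 < β < 2, and α < 0. Then q_{α,β} has a real root in the open interval (1, 2). -/
open Polynomial

/-- The quartic polynomial `q_{α,β}(w) = w⁴ + α w³ + (β − 4) w² − α w + 3` over ℂ. -/
noncomputable def q (α β : ℝ) : Polynomial ℂ :=
  X ^ 4 + C (α : ℂ) * X ^ 3 + C (((β - 4 : ℝ)) : ℂ) * X ^ 2 - C (α : ℂ) * X + C 3

lemma q_eval_ofReal (α β w : ℝ) :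
    (q α β).eval (w : ℂ) = ((w ^ 4 + α * w ^ 3 + (β - 4) * w ^ 2 - α * w + 3 : ℝ) : ℂ) := by
  simp only [q, eval_add, eval_sub, eval_mul, eval_pow, eval_C, eval_X]
  push_cast
  ring

theorem stmt_3_general (α β : ℝ) (hα₁ : 4 < α ^ 2)
    (hβ₁ : 0 < β) (hβ₂ : β < 2) (hα : α < 0) :
    ∃ w : ℝ, w ∈ Set.Ioo (1 : ℝ) 2 ∧ (q α β).IsRoot (w : ℂ) := by
  have hα_lt : α < -2 := by nlinarith
  let f : ℝ → ℝ := fun w => w ^ 4 + α * w ^ 3 + (β - 4) * w ^ 2 - α * w + 3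
  have hf_one : f 1 = β := by simp only [f]; ring
  have hf_two : f 2 = 6 * α + 4 * β + 3 := by simp only [f]; ring
  obtain ⟨w, hw, hfw⟩ := intermediate_value_Ioo' one_le_two
    (by fun_prop : Continuous f).continuousOn ⟨by linarith, hf_one ▸ hβ₁⟩
  refine ⟨w, hw, ?_⟩
  rw [IsRoot, q_eval_ofReal]
  exact_mod_cast hfw

/-- If `4 < α² < 6`, `0 < β < 2` and `α < 0`, then `q_{α,β}` has a real root
in the open interval `(1, 2)`. -/
theorem stmt_3 (α β : ℝ) (hα₁ : 4 < α ^ 2) (hα₂ : α ^ 2 < 6)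
    (hβ₁ : 0 < β) (hβ₂ : β < 2) (hα : α < 0) :
    ∃ w : ℝ, w ∈ Set.Ioo (1 : ℝ) 2 ∧ (q α β).IsRoot (w : ℂ) :=
  stmt_3_general α β hα₁ hβ₁ hβ₂ hα
end

section
/- Let α, β be real numbers with 4 < α² < 6 and 4/100 < β < 165/100. Then q_{α,β} has precisely 1 simple root in U_1(0) ∩ {z ∈ ℂ : Im z < 0}, precisely 1 simple root in U_1(0) ∩ {z ∈ ℂ : Im z > 0}, and precisely 2 different simple real roots, both lying in ℝ \ [−1, 1]. In particular, q_{α,β} has no roots on the unit circle S¹ and no roots in the real interval [−1, 1]. -/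
open Polynomial

/-!
Since `q_{-α,β}(w) = q_{α,β}(-w)`, it suffices to treat `2 < α < √6`. Then `q` is positive on
the real half-line `[-1, ∞)`, and the intermediate value theorem gives a real root
`r₂ ∈ (-17/10, -1)` and, because `q(3/r₂) < 0`, a second real root `r₁ < 3/r₂`, so `r₁ r₂ > 3`.
By Vieta the two remaining roots have product `3/(r₁ r₂) ∈ (0, 1)`. Neither is real: otherwise
both would be, and as real roots lie below `-1` their product would exceed `1`. So they form a
conjugate pair of squared modulus `3/(r₁ r₂) < 1`.
-/

open ComplexConjugate

lemma Multiset.exists_eq_insert_insert_pair {α : Type*} [DecidableEq α] {s : Multiset α}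
    {a b : α} (hab : a ≠ b) (ha : a ∈ s) (hb : b ∈ s) (hs : Multiset.card s = 4) :
    ∃ c d, s = {a, b, c, d} := by
  have hle : ({a, b} : Multiset α) ≤ s :=
    (Multiset.le_iff_subset (by simpa using hab)).2 (by simp [Multiset.subset_iff, ha, hb])
  obtain ⟨c, d, hcd⟩ := Multiset.card_eq_two.1 (show Multiset.card (s - {a, b}) = 2 by
    rw [Multiset.card_sub hle, hs]; rfl)
  refine ⟨c, d, ?_⟩
  rw [← add_tsub_cancel_of_le hle, hcd]
  rfl

lemma Complex.im_ne_zero_of_mul_eq_ofReal {p : ℂ → Prop} (hp : ∀ x : ℝ, p x → x < -1)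
    {u v : ℂ} (hu : p u) (hv : p v) {c : ℝ} (hc : c < 1) (huv : u * v = c) : u.im ≠ 0 := by
  intro h
  have hu' : u = (u.re : ℂ) := Complex.ext rfl (by simp [h])
  have hx := hp u.re (hu' ▸ hu)
  have hv' : v = ((c / u.re : ℝ) : ℂ) := by
    rw [hu'] at huv
    push_cast
    rw [← huv]
    field_simp [Complex.ofReal_ne_zero.2 (by linarith : u.re ≠ 0)]
  have hy := hp _ (hv' ▸ hv)
  have hcx : u.re * (c / u.re) = c := mul_div_cancel₀ c (by linarith)
  nlinarith

lemma Complex.conj_eq_of_conj_mem_insert_ofReal {r₁ r₂ : ℝ} {z w : ℂ} (hz : z.im ≠ 0)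
    (h : conj z ∈ ({(r₁ : ℂ), (r₂ : ℂ), z, w} : Multiset ℂ)) : conj z = w := by
  simp only [Multiset.insert_eq_cons, Multiset.mem_cons, Multiset.mem_singleton] at h
  rcases h with h | h | h | h
  · exact absurd (by simpa using congrArg Complex.im h) hz
  · exact absurd (by simpa using congrArg Complex.im h) hz
  · exact absurd (Complex.conj_eq_iff_im.1 h) hz
  · exact h

def IsOuterRealsInnerConjPair (s : Multiset ℂ) : Prop :=
  ∃ (r₁ r₂ : ℝ) (z : ℂ), s = {(r₁ : ℂ), (r₂ : ℂ), z, conj z} ∧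
    1 < |r₁| ∧ 1 < |r₂| ∧ r₁ ≠ r₂ ∧ 0 < z.im ∧ ‖z‖ < 1

namespace IsOuterRealsInnerConjPair

variable {s : Multiset ℂ}

lemma of_im_ne_zero {r₁ r₂ : ℝ} {z : ℂ} (h₁ : 1 < |r₁|) (h₂ : 1 < |r₂|) (hne : r₁ ≠ r₂)
    (hz : z.im ≠ 0) (hzn : ‖z‖ < 1) :
    IsOuterRealsInnerConjPair {(r₁ : ℂ), (r₂ : ℂ), z, conj z} := by
  rcases hz.lt_or_gt with hneg | hpos
  · refine ⟨r₁, r₂, conj z, ?_, h₁, h₂, hne, by simpa using hneg, by rwa [Complex.norm_conj]⟩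
    rw [Complex.conj_conj, Multiset.pair_comm]
  · exact ⟨r₁, r₂, z, rfl, h₁, h₂, hne, hpos, hzn⟩

lemma map_neg (h : IsOuterRealsInnerConjPair s) :
    IsOuterRealsInnerConjPair (s.map fun z => -z) := by
  obtain ⟨r₁, r₂, z, rfl, h₁, h₂, hne, hz, hzn⟩ := h
  refine ⟨-r₁, -r₂, -conj z, ?_, by rwa [abs_neg], by rwa [abs_neg], neg_injective.ne hne,
    by simpa using hz, by rwa [norm_neg, Complex.norm_conj]⟩
  simp only [Multiset.insert_eq_cons, Multiset.map_cons, Multiset.map_singleton,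
    Complex.ofReal_neg]
  rw [_root_.map_neg, Complex.conj_conj]
  exact congrArg _ (congrArg _ (Multiset.pair_comm _ _))

lemma location (h : IsOuterRealsInnerConjPair s) :
    Multiset.card (s.filter (fun z => ‖z‖ < 1 ∧ z.im < 0)) = 1 ∧
    Multiset.card (s.filter (fun z => ‖z‖ < 1 ∧ 0 < z.im)) = 1 ∧
    Multiset.card (s.filter (fun z => z.im = 0)) = 2 ∧
    (s.filter (fun z => z.im = 0)).Nodup ∧
    (∀ z ∈ s, z.im = 0 → 1 < |z.re|) ∧
    (∀ z ∈ s, ‖z‖ ≠ 1) := by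
  obtain ⟨r₁, r₂, z, rfl, h₁, h₂, hne, hz, hzn⟩ := h
  simp [Multiset.filter_singleton, h₁, h₂, hne, hz, hzn, not_lt.2 h₁.le,
    not_lt.2 h₂.le, hz.ne', hzn.ne, not_lt.2 hz.le, h₁.ne', h₂.ne']

end IsOuterRealsInnerConjPair

def qReal (α β x : ℝ) : ℝ := x ^ 4 + α * x ^ 3 + (β - 4) * x ^ 2 - α * x + 3

lemma eval_q_ofReal (α β x : ℝ) : (q α β).eval (x : ℂ) = qReal α β x := by
  simp [q, qReal]

lemma natDegree_q (α β : ℝ) : (q α β).natDegree = 4 := by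
  unfold q; compute_degree!

lemma monic_q (α β : ℝ) : (q α β).Monic := by
  unfold q; monicity!

lemma card_roots_q (α β : ℝ) : Multiset.card (q α β).roots = 4 :=
  IsAlgClosed.card_roots_eq_natDegree.trans (natDegree_q α β)

lemma prod_roots_q (α β : ℝ) : (q α β).roots.prod = 3 := by
  have h := (IsAlgClosed.splits (q α β)).coeff_zero_eq_prod_roots_of_monic (monic_q α β)
  have h0 : (q α β).coeff 0 = 3 := by simp [q]
  rw [h0, natDegree_q] at h
  norm_num at h
  exact h.symm

lemma isRoot_q_conj {α β : ℝ} {z : ℂ} (hz : (q α β).IsRoot z) : (q α β).IsRoot (conj z) := by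
  simpa [q, map_ofNat] using congrArg conj hz

lemma q_neg (α β : ℝ) : q (-α) β = (q α β).comp (-X) := by
  simp [q]; ring

section

variable {α β : ℝ}

lemma qReal_pos_of_neg_one_le (hα : 2 < α) (hα6 : α ^ 2 < 6) (hβ : 4 / 100 < β) {x : ℝ}
    (hx : -1 ≤ x) : 0 < qReal α β x := by
  have hα' : α < 49 / 20 := by nlinarith
  unfold qReal
  rcases le_or_gt x 0 with h0 | h0
  · nlinarith [mul_nonneg (mul_nonneg (sub_nonneg.2 hx) (sub_nonneg.2 hx)) (sq_nonneg (x - 1)),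
      mul_nonneg (by linarith : 0 ≤ α) (by nlinarith : 0 ≤ x * (x ^ 2 - 1))]
  rcases le_or_gt x 1 with h1 | h1
  · have key := mul_le_mul_of_nonpos_right hα'.le (by nlinarith : x * (x ^ 2 - 1) ≤ 0)
    nlinarith [sq_nonneg (x ^ 2 + 49 / 40 * x - 29 / 20), mul_nonneg h0.le (sub_nonneg.2 h1),
      mul_nonneg (mul_nonneg h0.le h0.le) (sub_nonneg.2 h1),
      mul_nonneg (mul_nonneg (mul_nonneg h0.le h0.le) h0.le) (sub_nonneg.2 h1),
      sq_nonneg (x - 93 / 100),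
      mul_nonneg (mul_nonneg h0.le (sub_nonneg.2 h1)) (sq_nonneg (x - 93 / 100))]
  · have h2 : x ^ 2 + α * x - 3 > 0 := by nlinarith
    nlinarith [mul_nonneg (by nlinarith : (0:ℝ) ≤ x ^ 2 - 1) h2.le,
      mul_pos (by linarith : (0:ℝ) < β) (by nlinarith : (0:ℝ) < x ^ 2)]

lemma mul_qReal_three_div {r : ℝ} (hr : r ≠ 0) :
    r ^ 4 * qReal α β (3 / r) =
      6 * (r ^ 4 + 2 * (β - 4) * r ^ 2 + 4 * α * r + 15) - 3 * qReal α β r := by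
  unfold qReal
  field_simp
  ring

lemma qReal_three_div_neg (hα : 2 < α) {r : ℝ} (hr : -17 / 10 < r) (hr' : r < -1)
    (h0 : qReal α β r = 0) : qReal α β (3 / r) < 0 := by
  have hA : 0 < r ^ 4 + 2 * r ^ 3 + (β - 4) * r ^ 2 - 2 * r + 3 := by
    have : r ^ 4 + 2 * r ^ 3 + (β - 4) * r ^ 2 - 2 * r + 3 =
        qReal α β r - (α - 2) * (r * (r ^ 2 - 1)) := by
      unfold qReal; ring
    rw [this, h0]
    nlinarith [mul_neg_of_neg_of_pos (by linarith : r < 0) (by nlinarith : 0 < r ^ 2 - 1)]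
  have hD : 0 < r ^ 4 + (2 * β - 10) * r ^ 2 + 9 := by
    nlinarith [mul_nonneg (sq_nonneg (r + 1))
      (mul_pos (by linarith : 0 < 3 + r) (by linarith : 0 < 1 - r)).le]
  have hH : r ^ 4 + 2 * (β - 4) * r ^ 2 + 4 * α * r + 15 < 0 := by
    have hid : (r ^ 2 - 1) * (r ^ 4 + 2 * (β - 4) * r ^ 2 + 4 * α * r + 15)
        = -(3 - r ^ 2) * (r ^ 4 + (2 * β - 10) * r ^ 2 + 9) + 4 * qReal α β r := by
      unfold qReal; ring
    rw [h0, mul_zero, add_zero] at hid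
    nlinarith [mul_pos (by nlinarith : 0 < 3 - r ^ 2) hD, (by nlinarith : 0 < r ^ 2 - 1)]
  have key := mul_qReal_three_div (α := α) (β := β) (by linarith : r ≠ 0)
  nlinarith [pow_pos (by linarith : 0 < -r) 4]

lemma exists_qReal_roots (hα : 2 < α) (hα6 : α ^ 2 < 6) (hβ : 4 / 100 < β)
    (hβ' : β < 165 / 100) :
    ∃ r₁ r₂ : ℝ, qReal α β r₁ = 0 ∧ qReal α β r₂ = 0 ∧ r₁ < r₂ ∧ r₂ < -1 ∧ 3 < r₁ * r₂ := by
  have hα' : α < 49 / 20 := by nlinarith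
  have hc : Continuous (qReal α β) := by unfold qReal; fun_prop
  obtain ⟨r₂, ⟨hr₂l, hr₂r⟩, hr₂⟩ : ∃ r ∈ Set.Ioo (-17 / 10 : ℝ) (-1), qReal α β r = 0 :=
    intermediate_value_Ioo (by norm_num) hc.continuousOn
      ⟨by unfold qReal; nlinarith, by unfold qReal; nlinarith⟩
  have h3 : 3 / r₂ ∈ Set.Ioo (-4 : ℝ) (-30 / 17) := by
    constructor
    · rw [lt_div_iff_of_neg (by linarith)]; linarith
    · rw [div_lt_iff_of_neg (by linarith)]; linarith
  obtain ⟨r₁, ⟨hr₁l, hr₁r⟩, hr₁⟩ : ∃ r ∈ Set.Ioo (-4 : ℝ) (3 / r₂), qReal α β r = 0 :=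
    intermediate_value_Ioo' h3.1.le hc.continuousOn
      ⟨qReal_three_div_neg hα hr₂l hr₂r hr₂, by unfold qReal; nlinarith⟩
  refine ⟨r₁, r₂, hr₁, hr₂, by linarith [h3.2], hr₂r, ?_⟩
  have := (lt_div_iff_of_neg (by linarith : r₂ < 0)).mp hr₁r
  linarith

end

lemma isOuterRealsInnerConjPair_roots_q_of_two_lt {α β : ℝ} (hα : 2 < α) (hα6 : α ^ 2 < 6)
    (hβ : 4 / 100 < β) (hβ' : β < 165 / 100) : IsOuterRealsInnerConjPair (q α β).roots := by
  have hq := monic_q α β |>.ne_zero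
  have hreal : ∀ x : ℝ, (q α β).IsRoot x → x < -1 := fun x hx => by
    rw [IsRoot, eval_q_ofReal, Complex.ofReal_eq_zero] at hx
    by_contra! h
    exact (qReal_pos_of_neg_one_le hα hα6 hβ h).ne' hx
  have hmem : ∀ x : ℝ, qReal α β x = 0 → (x : ℂ) ∈ (q α β).roots := fun x hx => by
    rw [mem_roots hq, IsRoot, eval_q_ofReal, hx, Complex.ofReal_zero]
  obtain ⟨r₁, r₂, hr₁, hr₂, h12, hr₂1, hprod⟩ := exists_qReal_roots hα hα6 hβ hβ'
  obtain ⟨z, w, hs⟩ := Multiset.exists_eq_insert_insert_pair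
    (Complex.ofReal_injective.ne h12.ne) (hmem r₁ hr₁) (hmem r₂ hr₂) (card_roots_q α β)
  have hroot : ∀ u ∈ (q α β).roots, (q α β).IsRoot u := fun u hu => (mem_roots hq).1 hu
  have hzw : z * w = ((3 / (r₁ * r₂) : ℝ) : ℂ) := by
    have h := prod_roots_q α β
    rw [hs] at h
    simp only [Multiset.insert_eq_cons, Multiset.prod_cons, Multiset.prod_singleton] at h
    have : (r₁ : ℂ) * r₂ ≠ 0 := by exact_mod_cast (by nlinarith : r₁ * r₂ ≠ 0)
    rw [Complex.ofReal_div, Complex.ofReal_mul, eq_div_iff this, Complex.ofReal_ofNat]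
    linear_combination h
  have hz : z.im ≠ 0 := Complex.im_ne_zero_of_mul_eq_ofReal hreal (hroot z (by simp [hs]))
    (hroot w (by simp [hs])) ((div_lt_one (by linarith)).2 hprod) hzw
  have hconj : conj z = w := Complex.conj_eq_of_conj_mem_insert_ofReal hz
    (hs ▸ (mem_roots hq).2 (isRoot_q_conj (hroot z (by simp [hs]))))
  have hnorm : ‖z‖ < 1 := by
    have h := Complex.mul_conj z
    rw [hconj, hzw, Complex.normSq_eq_norm_sq] at h
    have h' : ‖z‖ ^ 2 = 3 / (r₁ * r₂) := by exact_mod_cast h.symm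
    nlinarith [norm_nonneg z, (div_lt_one (by linarith)).2 hprod]
  rw [hs, ← hconj]
  exact .of_im_ne_zero (by rw [abs_of_neg (by linarith)]; linarith)
    (by rw [abs_of_neg (by linarith)]; linarith) h12.ne hz hnorm

lemma isOuterRealsInnerConjPair_roots_q {α β : ℝ} (hα : 4 < α ^ 2) (hα6 : α ^ 2 < 6)
    (hβ : 4 / 100 < β) (hβ' : β < 165 / 100) : IsOuterRealsInnerConjPair (q α β).roots := by
  rcases le_or_gt α 0 with hneg | hpos
  · have h := q_neg (-α) β
    rw [neg_neg] at h
    rw [h, roots_comp_neg_X]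
    exact (isOuterRealsInnerConjPair_roots_q_of_two_lt (by nlinarith) (by rwa [neg_sq]) hβ
      hβ').map_neg
  · exact isOuterRealsInnerConjPair_roots_q_of_two_lt (by nlinarith) hα6 hβ hβ'

/-- If `4 < α² < 6` and `4/100 < β < 165/100`, then `q_{α,β}` has precisely 1 simple
root in the open lower half-disk, precisely 1 simple root in the open upper half-disk,
and precisely 2 different simple real roots, both in `ℝ \ [−1,1]`. In particular it has
no roots on the unit circle and none in the real interval `[−1,1]`. -/
theorem stmt_4 (α β : ℝ) (hα₁ : 4 < α ^ 2) (hα₂ : α ^ 2 < 6)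
    (hβ₁ : 4 / 100 < β) (hβ₂ : β < 165 / 100) :
    Multiset.card ((q α β).roots.filter (fun z => ‖z‖ < 1 ∧ z.im < 0)) = 1 ∧
    Multiset.card ((q α β).roots.filter (fun z => ‖z‖ < 1 ∧ 0 < z.im)) = 1 ∧
    Multiset.card ((q α β).roots.filter (fun z => z.im = 0)) = 2 ∧
    ((q α β).roots.filter (fun z => z.im = 0)).Nodup ∧
    (∀ z ∈ (q α β).roots, z.im = 0 → 1 < |z.re|) ∧
    (∀ z ∈ (q α β).roots, ‖z‖ ≠ 1) ∧
    (∀ x : ℝ, x ∈ Set.Icc (-1 : ℝ) 1 → ¬ (q α β).IsRoot (x : ℂ)) := by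
  obtain ⟨hlower, hupper, hcard, hnodup, hreal, hnorm⟩ :=
    (isOuterRealsInnerConjPair_roots_q hα₁ hα₂ hβ₁ hβ₂).location
  refine ⟨hlower, hupper, hcard, hnodup, hreal, hnorm, fun x hx hroot => ?_⟩
  have h := hreal x ((mem_roots (monic_q α β).ne_zero).2 hroot) (Complex.ofReal_im x)
  rw [Complex.ofReal_re] at h
  exact h.not_ge (abs_le.2 hx)
end
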